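/- Let φ ∈ L^∞([0,1]), α ∈ [0,1] and 1 < p < ∞. The weighted translation operator T = T_{φ,α} on X = L^p([0,1]) does not satisfy the Supercyclicity Criterion: there do not exist dense subsets X₀ and Y₀ of X, a strictly increasing sequence (n_k) of positive integers, a sequence (λ_{n_k}) of non-zero complex numbers and maps S_{n_k} : Y₀ → X such that (i) λ_{n_k} T^{n_k} x → 0 as k → ∞ for every x ∈ X₀, (ii) λ_{n_k}^{-1} S_{n_k} y → 0 as k → ∞ for every y ∈ Y₀, and (iii) T^{n_k} S_{n_k} y → y as k → ∞ for every y ∈ Y₀. -/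

import Mathlib

open MeasureTheory Set Filter Topology Polynomial
open scoped ENNReal NNReal

/-- Lebesgue measure restricted to `[0,1]`. -/
noncomputable def μ01 : Measure ℝ := volume.restrict (Set.Icc 0 1)

/-- `T` is the Bishop operator `T_α` on `L^p([0,1])`, i.e.
`(T f)(x) = x · f({x + α})` for a.e. `x ∈ [0,1]`, where `{·}` is the fractional part. -/
def IsBishopOp (p : ℝ≥0∞) [Fact (1 ≤ p)] (α : ℝ)
    (T : Lp ℂ p μ01 →L[ℂ] Lp ℂ p μ01) : Prop :=
  ∀ f : Lp ℂ p μ01, ∀ᵐ x ∂μ01, (T f) x = (x : ℂ) * f (Int.fract (x + α))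

/-- `T` is the weighted translation operator `T_{φ,α}` on `L^p([0,1])`, i.e.
`(T f)(x) = φ(x) · f({x + α})` for a.e. `x ∈ [0,1]`. -/
def IsWTOp (p : ℝ≥0∞) [Fact (1 ≤ p)] (φ : ℝ → ℂ) (α : ℝ)
    (T : Lp ℂ p μ01 →L[ℂ] Lp ℂ p μ01) : Prop :=
  ∀ f : Lp ℂ p μ01, ∀ᵐ x ∂μ01, (T f) x = φ x * f (Int.fract (x + α))

/-!
For `ψ t = fract (t + m α)`, which preserves Lebesgue measure on `[0, 1]`, the power `T ^ m` is
again a weighted translation `f ↦ w · (f ∘ ψ)`. Hence for all `f, g` the functions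
`u = T ^ m g`, `v = f ∘ ψ`, `w = λ T ^ m f`, `z = λ⁻¹ g ∘ ψ` satisfy `|u| |v| = |w| |z|` a.e.,
which forces `min |u| |v| ≤ |w| + |z|` pointwise. Integrating over the probability space `[0, 1]`,
`1 ≤ ‖u - 1‖ + ‖v - 1‖ + ‖w‖ + ‖z‖` in `L¹`, hence in `L^p`. Under the Supercyclicity Criterion,
with `f ∈ X₀` and `y ∈ Y₀` close to `1`, `g = S_{n_k} y` and `k → ∞`, the right-hand side tends
to `‖y - 1‖ + ‖f - 1‖ < 1`.
-/

instance : IsProbabilityMeasure μ01 := ⟨by simp [μ01, Real.volume_Icc]⟩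

theorem ae_mem_Ico : ∀ᵐ t ∂μ01, t ∈ Ico (0 : ℝ) 1 := by
  rw [μ01, ← Measure.restrict_congr_set Ico_ae_eq_Icc]
  exact ae_restrict_mem measurableSet_Ico

-- `fract (t + β)` is the rotation of `ℝ / ℤ` by `β`, read in the fundamental domain `[0, 1)`.
theorem measurePreserving_fract_add (β : ℝ) :
    MeasurePreserving (fun t => Int.fract (t + β)) μ01 μ01 := by
  have hIoc : μ01 = volume.restrict (Ioc 0 (0 + 1)) := by
    rw [zero_add]; exact (Measure.restrict_congr_set Ioc_ae_eq_Icc).symm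
  have hmk : MeasurePreserving ((↑) : ℝ → UnitAddCircle) μ01 volume :=
    hIoc ▸ UnitAddCircle.measurePreserving_mk 0
  set e : UnitAddCircle → ℝ := fun z => (AddCircle.equivIco 1 0 z : ℝ)
  have he_mk (t : ℝ) : e t = Int.fract t := by simp [e]
  have he : MeasurePreserving e volume μ01 := by
    have hm : Measurable e :=
      measurable_subtype_coe.comp (AddCircle.measurableEquivIco 1 0).measurable
    refine ⟨hm, ?_⟩
    rw [← hmk.map_eq, Measure.map_map hm hmk.measurable]
    conv_rhs => rw [← Measure.map_id (μ := μ01)]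
    refine Measure.map_congr ?_
    filter_upwards [ae_mem_Ico] with t ht
    simpa [he_mk] using Int.fract_eq_self.2 ht
  convert he.comp ((measurePreserving_add_right volume (β : UnitAddCircle)).comp hmk) using 1
  funext t
  simp only [Function.comp_apply, ← QuotientAddGroup.mk_add, he_mk]

theorem norm_le_of_norm_mul_norm_eq {E : Type*} [SeminormedAddCommGroup E] {c u v w z : E}
    (h : ‖u‖ * ‖v‖ = ‖w‖ * ‖z‖) : ‖c‖ ≤ ‖u - c‖ + ‖v - c‖ + ‖w‖ + ‖z‖ := by
  have hmin : min ‖u‖ ‖v‖ ≤ ‖w‖ + ‖z‖ := by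
    by_contra! hlt
    have hw : ‖w‖ < ‖u‖ := by linarith [min_le_left ‖u‖ ‖v‖, norm_nonneg z]
    have hz : ‖z‖ < ‖v‖ := by linarith [min_le_right ‖u‖ ‖v‖, norm_nonneg w]
    exact (mul_lt_mul'' hw hz (norm_nonneg w) (norm_nonneg z)).ne' h
  have hu : ‖c‖ ≤ ‖u‖ + ‖u - c‖ := by simpa [norm_sub_rev] using norm_le_norm_add_norm_sub' c u
  have hv : ‖c‖ ≤ ‖v‖ + ‖v - c‖ := by simpa [norm_sub_rev] using norm_le_norm_add_norm_sub' c v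
  rcases min_choice ‖u‖ ‖v‖ with h | h <;> rw [h] at hmin <;>
    linarith [norm_nonneg (u - c), norm_nonneg (v - c)]

theorem MeasureTheory.Lp.enorm_le_of_norm_mul_norm_eq {α E : Type*} [MeasurableSpace α] {μ : Measure α}
    [IsProbabilityMeasure μ] [NormedAddCommGroup E] {p : ℝ≥0∞} [Fact (1 ≤ p)] (c : E)
    {u v w z : Lp E p μ} (h : ∀ᵐ t ∂μ, ‖u t‖ * ‖v t‖ = ‖w t‖ * ‖z t‖) :
    ‖c‖ₑ ≤ ‖u - Lp.const p μ c‖ₑ + ‖v - Lp.const p μ c‖ₑ + ‖w‖ₑ + ‖z‖ₑ := by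
  set C := Lp.const p μ c
  have hpt : ∀ᵐ t ∂μ, ‖c‖ₑ ≤ ‖(u - C) t‖ₑ + ‖(v - C) t‖ₑ + ‖w t‖ₑ + ‖z t‖ₑ := by
    filter_upwards [h, Lp.coeFn_sub u C, Lp.coeFn_sub v C, Lp.coeFn_const p μ c]
      with t ht hu hv hC
    rw [hu, hv, Pi.sub_apply, Pi.sub_apply, hC, Function.const_apply]
    simp only [← ofReal_norm, ← ENNReal.ofReal_add, norm_nonneg, add_nonneg]
    rw [← ENNReal.ofReal_add (by positivity) (norm_nonneg _)]
    exact ENNReal.ofReal_le_ofReal (norm_le_of_norm_mul_norm_eq ht)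
  have hL1 (f : Lp E p μ) : ∫⁻ t, ‖f t‖ₑ ∂μ ≤ ‖f‖ₑ := by
    rw [← eLpNorm_one_eq_lintegral_enorm, Lp.enorm_def]
    exact eLpNorm_le_eLpNorm_of_exponent_le Fact.out (Lp.aestronglyMeasurable f)
  calc ‖c‖ₑ = ∫⁻ _, ‖c‖ₑ ∂μ := by simp
    _ ≤ ∫⁻ t, ‖(u - C) t‖ₑ + ‖(v - C) t‖ₑ + ‖w t‖ₑ + ‖z t‖ₑ ∂μ := lintegral_mono_ae hpt
    _ = ∫⁻ t, ‖(u - C) t‖ₑ ∂μ + ∫⁻ t, ‖(v - C) t‖ₑ ∂μ + ∫⁻ t, ‖w t‖ₑ ∂μ + ∫⁻ t, ‖z t‖ₑ ∂μ := by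
      rw [lintegral_add_left' (by fun_prop), lintegral_add_left' (by fun_prop),
        lintegral_add_left' (by fun_prop)]
    _ ≤ _ := by gcongr <;> exact hL1 _

namespace IsWTOp

variable {p : ℝ≥0∞} [Fact (1 ≤ p)] {φ : ℝ → ℂ} {α : ℝ} {T : Lp ℂ p μ01 →L[ℂ] Lp ℂ p μ01}

theorem pow (hT : IsWTOp p φ α T) (m : ℕ) :
    IsWTOp p (fun t => ∏ j ∈ Finset.range m, φ (Int.fract (t + j * α))) (m * α) (T ^ m) := by
  induction m with
  | zero =>
    intro f
    filter_upwards [ae_mem_Ico] with t ht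
    simp [Int.fract_eq_self.2 ht]
  | succ m ih =>
    intro f
    have hψ := measurePreserving_fract_add (m * α)
    filter_upwards [ih (T f), hψ.quasiMeasurePreserving.ae (hT f)] with t ht hTf
    have hfract : Int.fract (Int.fract (t + m * α) + α) = Int.fract (t + (m + 1 : ℕ) * α) := by
      rw [Int.fract_eq_fract]
      exact ⟨-⌊t + m * α⌋, by rw [Int.fract]; push_cast; ring⟩
    rw [pow_succ, mul_apply_eq_comp, ht, hTf, hfract, Finset.prod_range_succ, mul_assoc]

theorem enorm_const_le (hT : IsWTOp p φ α T) {l : ℂ} (hl : l ≠ 0) (c : ℂ) (x g : Lp ℂ p μ01) :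
    ‖c‖ₑ ≤ ‖T g - Lp.const p μ01 c‖ₑ + ‖x - Lp.const p μ01 c‖ₑ + ‖l • T x‖ₑ + ‖l⁻¹ • g‖ₑ := by
  have hψ := measurePreserving_fract_add α
  set xψ := Lp.compMeasurePreserving _ hψ x
  set gψ := Lp.compMeasurePreserving _ hψ (l⁻¹ • g)
  -- with `s = fract (t + α)`, both sides equal `‖φ t‖ * ‖x s‖ * ‖g s‖`
  have hcouple : ∀ᵐ t ∂μ01, ‖T g t‖ * ‖xψ t‖ = ‖(l • T x) t‖ * ‖gψ t‖ := by
    filter_upwards [hT g, hT x, Lp.coeFn_smul l (T x), Lp.coeFn_compMeasurePreserving x hψ,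
      Lp.coeFn_compMeasurePreserving (l⁻¹ • g) hψ,
      hψ.quasiMeasurePreserving.ae (Lp.coeFn_smul l⁻¹ g)] with t hg hx hlx hxψ hgψ hlg
    rw [hg, hlx, Pi.smul_apply, hx, hxψ, hgψ, Function.comp_apply, Function.comp_apply, hlg,
      Pi.smul_apply]
    simp only [norm_mul, norm_smul, norm_inv]
    field_simp [norm_ne_zero_iff.2 hl]
  have hxψ : ‖xψ - Lp.const p μ01 c‖ₑ = ‖x - Lp.const p μ01 c‖ₑ := by
    rw [Lp.enorm_def, Lp.enorm_def,
      ← eLpNorm_comp_measurePreserving (Lp.aestronglyMeasurable (x - Lp.const p μ01 c)) hψ]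
    refine eLpNorm_congr_ae ?_
    filter_upwards [Lp.coeFn_sub xψ (Lp.const p μ01 c), Lp.coeFn_compMeasurePreserving x hψ,
      Lp.coeFn_const p μ01 c, hψ.quasiMeasurePreserving.ae (Lp.coeFn_sub x (Lp.const p μ01 c)),
      hψ.quasiMeasurePreserving.ae (Lp.coeFn_const p μ01 c)] with t h1 h2 h3 h4 h5
    simp only [Function.comp_apply] at *
    rw [h1, h4, Pi.sub_apply, h2, h3, Pi.sub_apply, h5, Function.const_apply, Function.const_apply]
  have hgψ : ‖gψ‖ₑ = ‖l⁻¹ • g‖ₑ := by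
    rw [Lp.enorm_def, Lp.enorm_def]
    exact (l⁻¹ • g).1.eLpNorm_compMeasurePreserving hψ
  simpa [hxψ, hgψ] using Lp.enorm_le_of_norm_mul_norm_eq c hcouple

end IsWTOp

theorem weighted_translation_not_supercyclicity_criterion_general (p : ℝ≥0∞) [Fact (1 ≤ p)]
    (φ : ℝ → ℂ)
    (α : ℝ)
    (T : Lp ℂ p μ01 →L[ℂ] Lp ℂ p μ01) (hT : IsWTOp p φ α T) :
    ¬ ∃ (X₀ Y₀ : Set (Lp ℂ p μ01)) (n : ℕ → ℕ) (lam : ℕ → ℂ)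
        (S : ℕ → Lp ℂ p μ01 → Lp ℂ p μ01),
      Dense X₀ ∧ Dense Y₀ ∧ StrictMono n ∧ (∀ k, 0 < n k) ∧ (∀ k, lam k ≠ 0) ∧
      (∀ x ∈ X₀, Tendsto (fun k => lam k • (T ^ n k) x) atTop (𝓝 0)) ∧
      (∀ y ∈ Y₀, Tendsto (fun k => (lam k)⁻¹ • S k y) atTop (𝓝 0)) ∧
      (∀ y ∈ Y₀, Tendsto (fun k => (T ^ n k) (S k y)) atTop (𝓝 y)) := by
  rintro ⟨X₀, Y₀, n, lam, S, hX₀, hY₀, -, -, hlam, hTx, hS, hTS⟩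
  set one := Lp.const p μ01 (1 : ℂ)
  have hsep : ∀ x ∈ X₀, ∀ y ∈ Y₀, 1 ≤ ‖y - one‖ₑ + ‖x - one‖ₑ := by
    intro x hx y hy
    have hlim : Tendsto (fun k => ‖(T ^ n k) (S k y) - one‖ₑ + ‖x - one‖ₑ +
        ‖lam k • (T ^ n k) x‖ₑ + ‖(lam k)⁻¹ • S k y‖ₑ) atTop
        (𝓝 (‖y - one‖ₑ + ‖x - one‖ₑ + ‖(0 : Lp ℂ p μ01)‖ₑ + ‖(0 : Lp ℂ p μ01)‖ₑ)) :=
      ((((hTS y hy).sub_const one).enorm.add tendsto_const_nhds).add (hTx x hx).enorm).add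
        (hS y hy).enorm
    simpa using ge_of_tendsto' hlim fun k => (hT.pow (n k)).enorm_const_le (hlam k) 1 x (S k y)
  obtain ⟨x, hx, hx1⟩ := EMetric.mem_closure_iff.1 (hX₀ one) (1 / 2) (by norm_num)
  obtain ⟨y, hy, hy1⟩ := EMetric.mem_closure_iff.1 (hY₀ one) (1 / 2) (by norm_num)
  rw [edist_comm, edist_eq_enorm_sub] at hx1 hy1
  exact (hsep x hx y hy).not_gt (ENNReal.add_halves 1 ▸ ENNReal.add_lt_add hy1 hx1)

/-- The weighted translation operator `T = T_{φ,α}` on `L^p([0,1])` does not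
satisfy the Supercyclicity Criterion: there do not exist dense subsets `X₀, Y₀`, a strictly
increasing sequence `(n_k)` of positive integers, non-zero complex numbers `(λ_{n_k})` and
maps `S_{n_k} : Y₀ → X` with `λ_{n_k} T^{n_k} x → 0` on `X₀`, `λ_{n_k}⁻¹ S_{n_k} y → 0` on
`Y₀` and `T^{n_k} S_{n_k} y → y` on `Y₀`. -/
theorem weighted_translation_not_supercyclicity_criterion (p : ℝ≥0∞) [Fact (1 ≤ p)]
    (hp : 1 < p) (hp' : p ≠ ∞)
    (φ : ℝ → ℂ) (hφ : MemLp φ ⊤ μ01)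
    (α : ℝ) (hα : α ∈ Set.Icc (0 : ℝ) 1)
    (T : Lp ℂ p μ01 →L[ℂ] Lp ℂ p μ01) (hT : IsWTOp p φ α T) :
    ¬ ∃ (X₀ Y₀ : Set (Lp ℂ p μ01)) (n : ℕ → ℕ) (lam : ℕ → ℂ)
        (S : ℕ → Lp ℂ p μ01 → Lp ℂ p μ01),
      Dense X₀ ∧ Dense Y₀ ∧ StrictMono n ∧ (∀ k, 0 < n k) ∧ (∀ k, lam k ≠ 0) ∧
      (∀ x ∈ X₀, Tendsto (fun k => lam k • (T ^ n k) x) atTop (𝓝 0)) ∧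
      (∀ y ∈ Y₀, Tendsto (fun k => (lam k)⁻¹ • S k y) atTop (𝓝 0)) ∧
      (∀ y ∈ Y₀, Tendsto (fun k => (T ^ n k) (S k y)) atTop (𝓝 y)) :=
  weighted_translation_not_supercyclicity_criterion_general p φ α T hT
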